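/- Let β : ℝ² → ℝ be a positive C¹ function, ψ : ℝ² → ℂ a C¹ function, r > 0, and let k, k^⊥ ∈ ℝ² be orthonormal vectors with det([k, k^⊥]) = 1. Set ρ := r(k + i k^⊥) ∈ ℂ² and define u : ℝ² → ℂ by u(x) = β(x)^{−1/2} e^{ρ·x} (1 + ψ(x)), and φ(x) := ∇ψ(x) + ψ(x)ρ − (1+ψ(x)) ∇β(x)/(2β(x)) ∈ ℂ². Then for every x ∈ ℝ², det([∇(Re u)(x), ∇(Im u)(x)]) = β(x)^{−1} e^{2r (k·x)} · det([ r k + Re φ(x), r k^⊥ + Im φ(x) ]). -/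

import Mathlib

/-!
Write `A = β^{-1/2} e^{ρ·x}`. Differentiating the ansatz gives `∂ᵢu = A (ρᵢ + φᵢ)`, so the columns
`∇(Re u)`, `∇(Im u)` are the images of `Re (ρ + φ)`, `Im (ρ + φ)` under multiplication by `A`,
viewed as a map of `ℂ ≅ ℝ²`. That map is a rotation-dilation with determinant
`|A|² = β⁻¹ e^{2r k·x}`, and `Re ρ = r k`, `Im ρ = r k^⊥`.
-/

open Matrix

/-- The gradient of a real-valued function on ℝ², as a vector of partial derivatives. -/
noncomputable def grad (u : (Fin 2 → ℝ) → ℝ) (x : Fin 2 → ℝ) : Fin 2 → ℝ :=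
  fun i => fderiv ℝ u x (Pi.single i 1)

/-- The `i`-th partial derivative of a function on ℝ² (componentwise for vector values). -/
noncomputable def pd {E : Type*} [NormedAddCommGroup E] [NormedSpace ℝ E]
    (i : Fin 2) (f : (Fin 2 → ℝ) → E) (x : Fin 2 → ℝ) : E :=
  fderiv ℝ f x (Pi.single i 1)

/-- The 2×2 matrix with columns `a` and `b`. -/
def col2 (a b : Fin 2 → ℝ) : Matrix (Fin 2) (Fin 2) ℝ :=
  Matrix.of fun i => ![a i, b i]

theorem col2_det (a b : Fin 2 → ℝ) : (col2 a b).det = a 0 * b 1 - b 0 * a 1 := by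
  simp [col2, Matrix.det_fin_two]

theorem col2_re_im_mul_det (A : ℂ) (w : Fin 2 → ℂ) :
    (col2 (fun i => (A * w i).re) (fun i => (A * w i).im)).det =
      Complex.normSq A * (col2 (fun i => (w i).re) (fun i => (w i).im)).det := by
  simp only [col2_det, Complex.mul_re, Complex.mul_im, Complex.normSq_apply]
  ring

theorem grad_re_of_differentiableAt {f : (Fin 2 → ℝ) → ℂ} {x : Fin 2 → ℝ}
    (hf : DifferentiableAt ℝ f x) :
    grad (fun y => (f y).re) x = fun i => (pd i f x).re :=
  funext fun i =>
    congrArg (· (Pi.single i 1)) (Complex.reCLM.hasFDerivAt.comp x hf.hasFDerivAt).fderiv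

theorem grad_im_of_differentiableAt {f : (Fin 2 → ℝ) → ℂ} {x : Fin 2 → ℝ}
    (hf : DifferentiableAt ℝ f x) :
    grad (fun y => (f y).im) x = fun i => (pd i f x).im :=
  funext fun i =>
    congrArg (· (Pi.single i 1)) (Complex.imCLM.hasFDerivAt.comp x hf.hasFDerivAt).fderiv

theorem HasFDerivAt.inv_sqrt {E : Type*} [NormedAddCommGroup E] [NormedSpace ℝ E]
    {β : E → ℝ} {β' : E →L[ℝ] ℝ} {x : E} (hβ : HasFDerivAt β β' x) (hx : 0 < β x) :
    HasFDerivAt (fun y => (Real.sqrt (β y))⁻¹) (-((Real.sqrt (β x))⁻¹ / (2 * β x)) • β') x := by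
  have hs : Real.sqrt (β x) ≠ 0 := (Real.sqrt_pos.2 hx).ne'
  refine ((hasDerivAt_inv hs).comp_hasFDerivAt x (hβ.sqrt hx.ne')).congr_fderiv ?_
  rw [smul_smul]
  congr 1
  field_simp
  rw [Real.sq_sqrt hx.le]

section Ansatz

variable {ι : Type*} [Fintype ι]

noncomputable def linearPhase (ρ : ι → ℂ) : (ι → ℝ) →L[ℝ] ℂ :=
  ∑ j, ρ j • (Complex.ofRealCLM.comp (ContinuousLinearMap.proj j))

theorem linearPhase_apply (ρ : ι → ℂ) (y : ι → ℝ) : linearPhase ρ y = ∑ j, ρ j * y j := by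
  simp [linearPhase, smul_eq_mul]

theorem linearPhase_single [DecidableEq ι] (ρ : ι → ℂ) (i : ι) :
    linearPhase ρ (Pi.single i 1) = ρ i := by
  simp [linearPhase_apply, Pi.single_apply, apply_ite]

noncomputable def cgoAnsatz (β : (ι → ℝ) → ℝ) (ψ : (ι → ℝ) → ℂ) (ρ : ι → ℂ) (y : ι → ℝ) : ℂ :=
  ((Real.sqrt (β y))⁻¹ : ℂ) * Complex.exp (∑ j, ρ j * y j) * (1 + ψ y)

theorem hasFDerivAt_cgoAnsatz {β : (ι → ℝ) → ℝ} {β' : (ι → ℝ) →L[ℝ] ℝ} {ψ : (ι → ℝ) → ℂ}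
    {ψ' : (ι → ℝ) →L[ℝ] ℂ} {x : ι → ℝ} (hβ : HasFDerivAt β β' x) (hψ : HasFDerivAt ψ ψ' x)
    (hx : 0 < β x) (ρ : ι → ℂ) :
    HasFDerivAt (cgoAnsatz β ψ ρ)
      ((((Real.sqrt (β x))⁻¹ : ℂ) * Complex.exp (∑ j, ρ j * x j)) •
        (linearPhase ρ + (ψ' + ψ x • linearPhase ρ -
          (1 + ψ x) • Complex.ofRealCLM.comp ((2 * β x)⁻¹ • β')))) x := by
  have hphase : HasFDerivAt (fun y : ι → ℝ => ∑ j, ρ j * y j) (linearPhase ρ) x := by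
    convert (linearPhase ρ).hasFDerivAt using 1
    exact funext fun y => (linearPhase_apply ρ y).symm
  have hamp : HasFDerivAt (fun y => ((Real.sqrt (β y) : ℂ))⁻¹)
      (Complex.ofRealCLM.comp (-((Real.sqrt (β x))⁻¹ / (2 * β x)) • β')) x := by
    simpa only [Function.comp_def, Complex.ofRealCLM_apply, Complex.ofReal_inv] using
      Complex.ofRealCLM.hasFDerivAt.comp x (hβ.inv_sqrt hx)
  have h : HasFDerivAt (cgoAnsatz β ψ ρ) _ x := (hamp.mul hphase.cexp).mul (hψ.const_add 1)
  refine h.congr_fderiv ?_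
  ext v
  simp only [Pi.mul_apply, _root_.smul_apply, _root_.add_apply, _root_.sub_apply,
    ContinuousLinearMap.comp_apply, Complex.ofRealCLM_apply, smul_eq_mul]
  push_cast
  ring

end Ansatz

theorem pd_cgoAnsatz {β : (Fin 2 → ℝ) → ℝ} {ψ : (Fin 2 → ℝ) → ℂ} {x : Fin 2 → ℝ}
    (hβ : DifferentiableAt ℝ β x) (hψ : DifferentiableAt ℝ ψ x) (hx : 0 < β x) (ρ : Fin 2 → ℂ)
    (i : Fin 2) :
    pd i (cgoAnsatz β ψ ρ) x = ((Real.sqrt (β x) : ℂ))⁻¹ * Complex.exp (∑ j, ρ j * x j) *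
      (ρ i + (pd i ψ x + ψ x * ρ i - (1 + ψ x) * ((pd i β x / (2 * β x) : ℝ) : ℂ))) := by
  rw [pd, (hasFDerivAt_cgoAnsatz hβ.hasFDerivAt hψ.hasFDerivAt hx ρ).fderiv]
  simp only [_root_.smul_apply, _root_.add_apply, _root_.sub_apply,
    ContinuousLinearMap.comp_apply, Complex.ofRealCLM_apply, linearPhase_single, smul_eq_mul, pd]
  push_cast
  ring

theorem Complex.normSq_inv_sqrt_mul_exp {b : ℝ} (hb : 0 ≤ b) (z : ℂ) :
    Complex.normSq (((Real.sqrt b : ℂ))⁻¹ * Complex.exp z) = b⁻¹ * Real.exp (2 * z.re) := by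
  rw [Complex.normSq_mul, map_inv₀, Complex.normSq_ofReal, Real.mul_self_sqrt hb,
    ← Complex.sq_norm, Complex.norm_exp, ← Real.exp_nat_mul]
  norm_num

theorem Complex.re_ofReal_mul_add_I_mul (r a b : ℝ) : ((r : ℂ) * (a + I * b)).re = r * a := by
  simp

theorem Complex.im_ofReal_mul_add_I_mul (r a b : ℝ) : ((r : ℂ) * (a + I * b)).im = r * b := by
  simp

theorem Complex.re_sum_ofReal_mul_add_I_mul_mul {ι : Type*} [Fintype ι] (r : ℝ)
    (k k' x : ι → ℝ) :
    (∑ j, (r : ℂ) * ((k j : ℂ) + I * (k' j : ℂ)) * (x j : ℂ)).re = r * (k ⬝ᵥ x) := by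
  simp only [re_sum, re_mul_ofReal, re_ofReal_mul_add_I_mul]
  simp only [dotProduct, Finset.mul_sum, mul_assoc]

theorem stmt16 (β : (Fin 2 → ℝ) → ℝ) (hβpos : ∀ x, 0 < β x) (hβC : ContDiff ℝ 1 β)
    (ψ : (Fin 2 → ℝ) → ℂ) (hψC : ContDiff ℝ 1 ψ)
    (r : ℝ) (k k' : Fin 2 → ℝ) :
    ∀ x : Fin 2 → ℝ,
      (col2
        (grad (fun y => (((Real.sqrt (β y))⁻¹ : ℂ) *
          Complex.exp (∑ j : Fin 2, (r : ℂ) * ((k j : ℂ) + Complex.I * (k' j : ℂ)) * (y j : ℂ)) *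
          (1 + ψ y)).re) x)
        (grad (fun y => (((Real.sqrt (β y))⁻¹ : ℂ) *
          Complex.exp (∑ j : Fin 2, (r : ℂ) * ((k j : ℂ) + Complex.I * (k' j : ℂ)) * (y j : ℂ)) *
          (1 + ψ y)).im) x)).det =
      (β x)⁻¹ * Real.exp (2 * r * (k ⬝ᵥ x)) *
        (col2
          (fun i => r * k i + (pd i ψ x + ψ x * ((r : ℂ) * ((k i : ℂ) + Complex.I * (k' i : ℂ))) -
            (1 + ψ x) * ((pd i β x / (2 * β x) : ℝ) : ℂ)).re)
          (fun i => r * k' i + (pd i ψ x + ψ x * ((r : ℂ) * ((k i : ℂ) + Complex.I * (k' i : ℂ))) -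
            (1 + ψ x) * ((pd i β x / (2 * β x) : ℝ) : ℂ)).im)).det := by
  intro x
  set ρ : Fin 2 → ℂ := fun j => (r : ℂ) * ((k j : ℂ) + Complex.I * (k' j : ℂ))
  have hβ := hβC.differentiable one_ne_zero x
  have hψ := hψC.differentiable one_ne_zero x
  have hu := (hasFDerivAt_cgoAnsatz hβ.hasFDerivAt hψ.hasFDerivAt (hβpos x) ρ).differentiableAt
  show (col2 (grad (fun y => (cgoAnsatz β ψ ρ y).re) x)
    (grad (fun y => (cgoAnsatz β ψ ρ y).im) x)).det = _
  rw [grad_re_of_differentiableAt hu, grad_im_of_differentiableAt hu]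
  simp only [pd_cgoAnsatz hβ hψ (hβpos x), col2_re_im_mul_det,
    Complex.normSq_inv_sqrt_mul_exp (hβpos x).le]
  simp only [ρ, Complex.re_sum_ofReal_mul_add_I_mul_mul, Complex.add_re, Complex.add_im,
    Complex.re_ofReal_mul_add_I_mul, Complex.im_ofReal_mul_add_I_mul, mul_assoc 2 r]
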